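/- arXiv:1612.07350 — 2 statements merged into one kernel-verified Lean document; each statement's English description precedes it below -/
import Mathlib

section
/- Lemma (no spurious termination of the correction loop, case l = 0, u = ∞): Let B be a symmetric positive definite n×n matrix, x ∈ R^n with x ≥ 0, g ∈ R^n, and define F = {i : x_i > 0}, F̄ = {i : x_i = 0}, and A_0 = {i ∈ F̄ : g_i ≥ 0}. Run the correction loop: at iteration t, let p^t with p^t restricted to the complement of A_t solve B_{S,S} p^t_S = -g_S (S = complement of A_t) and p^t_{A_t} = 0; set C_t = {i ∈ F̄ \ A_t : p^t_i < 0} and A_{t+1} = A_t ∪ C_t; terminate when C_t = ∅. If the loop terminates at iteration t̂ with p^{t̂} = 0, then t̂ = 0 and g_i = 0 for all i ∉ A_0; consequently x satisfies the first-order optimality conditions g_i = 0 for x_i > 0 and g_i ≥ 0 for x_i = 0. -/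
/-!
If the loop stopped at `t̂ = t + 1` with `p^{t+1} = 0`, the gradient would vanish off
`A_{t+1}`. Every index of `C_t` lies outside `A_0` with `x_i = 0`, so `g_i < 0` there,
while `p^t_i < 0` as well. Hence `p^t_i (B p^t)_i = -p^t_i g_i ≤ 0` for every `i`, and
positive definiteness forces `p^t = 0`, contradicting `C_t ≠ ∅`. So `t̂ = 0`, and
`p^0 = 0` gives `g = 0` off `A_0`, which is the optimality condition.
-/

open Matrix

theorem Matrix.PosDef.eq_zero_of_forall_mul_mulVec_nonpos {ι : Type*} [Fintype ι]
    {B : Matrix ι ι ℝ} (hB : B.PosDef) {q : ι → ℝ} (h : ∀ i, q i * (B *ᵥ q) i ≤ 0) :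
    q = 0 := by
  by_contra hq
  have hpos : 0 < q ⬝ᵥ B *ᵥ q := by simpa using hB.dotProduct_mulVec_pos hq
  exact hpos.not_ge (Finset.sum_nonpos fun i _ => h i)

section CorrectionLoop

variable {ι : Type*} {B : Matrix ι ι ℝ} {x g q : ι → ℝ} {S : Set ι}

theorem eq_zero_of_correction_eq_zero [Fintype ι]
    (hsys : ∀ i ∉ S, (B *ᵥ q) i = -g i) (hq : q = 0) {i : ι} (hi : i ∉ S) : g i = 0 := by
  simpa [hq, eq_comm] using hsys i hi

theorem correction_eq_zero_of_next_eq_zero [Fintype ι] (hB : B.PosDef) {q' : ι → ℝ}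
    (hsys : ∀ i ∉ S, (B *ᵥ q) i = -g i) (hqS : ∀ i ∈ S, q i = 0)
    (hsys' : ∀ i ∉ S ∪ {i | x i = 0 ∧ i ∉ S ∧ q i < 0}, (B *ᵥ q') i = -g i) (hq' : q' = 0)
    (hneg : ∀ i, x i = 0 → i ∉ S → g i < 0) : q = 0 := by
  refine hB.eq_zero_of_forall_mul_mulVec_nonpos fun i => ?_
  by_cases hiS : i ∈ S
  · simp [hqS i hiS]
  rw [hsys i hiS]
  by_cases hiC : x i = 0 ∧ q i < 0
  · nlinarith [hneg i hiC.1 hiS, hiC.2]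
  · have hi' : i ∉ S ∪ {i | x i = 0 ∧ i ∉ S ∧ q i < 0} := by
      rintro (h | ⟨hx, -, hq⟩)
      exacts [hiS h, hiC ⟨hx, hq⟩]
    simp [eq_zero_of_correction_eq_zero hsys' hq' hi']

end CorrectionLoop

theorem stmt_5_general (n : ℕ) (B : Matrix (Fin n) (Fin n) ℝ) (hB : B.PosDef)
    (x g : Fin n → ℝ)
    (A : ℕ → Set (Fin n)) (p : ℕ → Fin n → ℝ) (that : ℕ)
    (hA0 : A 0 = {i | x i = 0 ∧ 0 ≤ g i})
    (hsys : ∀ t, ∀ i ∉ A t, B.mulVec (p t) i = -g i)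
    (hpA : ∀ t, ∀ i ∈ A t, p t i = 0)
    (hstep : ∀ t, A (t + 1) = A t ∪ {i | x i = 0 ∧ i ∉ A t ∧ p t i < 0})
    (hrun : ∀ t < that, ({i | x i = 0 ∧ i ∉ A t ∧ p t i < 0} : Set (Fin n)).Nonempty)
    (hp0 : p that = 0) :
    that = 0 ∧ (∀ i, i ∉ A 0 → g i = 0) ∧
      (∀ i, 0 < x i → g i = 0) ∧ (∀ i, x i = 0 → 0 ≤ g i) := by
  have hmono : Monotone A := monotone_nat_of_le_succ fun t => hstep t ▸ Set.subset_union_left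
  have hthat : that = 0 := by
    obtain _ | t := that
    · rfl
    obtain ⟨j, -, -, hj⟩ := hrun t t.lt_succ_self
    have hneg : ∀ i, x i = 0 → i ∉ A t → g i < 0 := fun i hx hi =>
      not_le.mp fun hg => hi (hmono t.zero_le (hA0 ▸ ⟨hx, hg⟩))
    have := correction_eq_zero_of_next_eq_zero hB (hsys t) (hpA t)
      (hstep t ▸ hsys (t + 1)) hp0 hneg
    simp [this] at hj
  subst hthat
  have hg0 : ∀ i ∉ A 0, g i = 0 := fun i => eq_zero_of_correction_eq_zero (hsys 0) hp0
  refine ⟨rfl, hg0, fun i hx => hg0 i (hA0 ▸ fun h => hx.ne' h.1), fun i hx => ?_⟩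
  by_cases hi : i ∈ A 0
  · exact (hA0 ▸ hi : i ∈ {i | x i = 0 ∧ 0 ≤ g i}).2
  · exact (hg0 i hi).ge

/-- Lemma 2, case `l = 0`, `u = ∞`: if the active-set correction
loop terminates at iteration `t̂` with `p^{t̂} = 0`, then `t̂ = 0`, the gradient
vanishes off `A_0`, and the iterate is first-order optimal. -/
theorem stmt_5 (n : ℕ) (B : Matrix (Fin n) (Fin n) ℝ) (hB : B.PosDef)
    (x g : Fin n → ℝ) (hx : ∀ i, 0 ≤ x i)
    (A : ℕ → Set (Fin n)) (p : ℕ → Fin n → ℝ) (that : ℕ)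
    (hA0 : A 0 = {i | x i = 0 ∧ 0 ≤ g i})
    (hsys : ∀ t, ∀ i ∉ A t, B.mulVec (p t) i = -g i)
    (hpA : ∀ t, ∀ i ∈ A t, p t i = 0)
    (hstep : ∀ t, A (t + 1) = A t ∪ {i | x i = 0 ∧ i ∉ A t ∧ p t i < 0})
    (hrun : ∀ t < that, ({i | x i = 0 ∧ i ∉ A t ∧ p t i < 0} : Set (Fin n)).Nonempty)
    (hterm : ({i | x i = 0 ∧ i ∉ A that ∧ p that i < 0} : Set (Fin n)) = ∅)
    (hp0 : p that = 0) :
    that = 0 ∧ (∀ i, i ∉ A 0 → g i = 0) ∧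
      (∀ i, 0 < x i → g i = 0) ∧ (∀ i, x i = 0 → 0 ≤ g i) :=
  stmt_5_general n B hB x g A p that hA0 hsys hpA hstep hrun hp0
end

section
/- Let B be symmetric positive definite on R^n, g ∈ R^n, and let disjoint sets F, Ā, C partition a subset of {1,...,n} with all remaining indices fixed to zero. Suppose p̂ ≠ 0 solves the linear system B_{S,S} p̂_S = -g_S with S = F ∪ Ā ∪ C and that g_F = 0 and g_Ā = 0. Then (g_C)ᵀ p̂_C = -p̂ᵀBp̂ < 0. In particular, if additionally g_i < 0 and p̂_i < 0 for all i ∈ C with C nonempty, a contradiction arises, so no such p̂ exists. -/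
open Matrix Finset

section

variable {ι R : Type*} [Fintype ι]

theorem dotProduct_eq_sum_of_support_subset [NonUnitalNonAssocSemiring R] {v : ι → R}
    (w : ι → R) {s : Finset ι} (hv : ∀ i ∉ s, v i = 0) :
    v ⬝ᵥ w = ∑ i ∈ s, v i * w i :=
  (sum_subset (subset_univ s) fun i _ hi => by rw [hv i hi, zero_mul]).symm

theorem sum_mul_eq_neg_dotProduct_mulVec [CommRing R] {B : Matrix ι ι R} {g p : ι → R}
    {S C : Finset ι} (hCS : C ⊆ S) (hp : ∀ i ∉ S, p i = 0)
    (hsys : ∀ i ∈ S, (B *ᵥ p) i = -g i) (hg : ∀ i ∈ S, i ∉ C → g i = 0) :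
    ∑ i ∈ C, g i * p i = -(p ⬝ᵥ B *ᵥ p) :=
  calc ∑ i ∈ C, g i * p i
      = ∑ i ∈ S, g i * p i := sum_subset hCS fun i hiS hiC => by rw [hg i hiS hiC, zero_mul]
    _ = -∑ i ∈ S, p i * (B *ᵥ p) i := by
      rw [← sum_neg_distrib]
      exact sum_congr rfl fun i hi => by rw [hsys i hi]; ring
    _ = -(p ⬝ᵥ B *ᵥ p) := by rw [dotProduct_eq_sum_of_support_subset _ hp]

end

theorem stmt_6_general (n : ℕ) (B : Matrix (Fin n) (Fin n) ℝ) (hB : B.PosDef)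
    (g phat : Fin n → ℝ) (F Abar C : Finset (Fin n))
    (hsupp : ∀ i ∉ F ∪ Abar ∪ C, phat i = 0)
    (hsys : ∀ i ∈ F ∪ Abar ∪ C, B.mulVec phat i = -g i)
    (hgF : ∀ i ∈ F, g i = 0) (hgAbar : ∀ i ∈ Abar, g i = 0)
    (hp : phat ≠ 0) :
    (∑ i ∈ C, g i * phat i = -(phat ⬝ᵥ B.mulVec phat)) ∧
    (∑ i ∈ C, g i * phat i < 0) ∧
    ((C.Nonempty ∧ ∀ i ∈ C, g i < 0 ∧ phat i < 0) → False) := by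
  have hgS : ∀ i ∈ F ∪ Abar ∪ C, i ∉ C → g i = 0 := by
    intro i hi hiC
    rcases mem_union.1 ((mem_union.1 hi).resolve_right hiC) with hiF | hiAbar
    · exact hgF i hiF
    · exact hgAbar i hiAbar
  have key := sum_mul_eq_neg_dotProduct_mulVec subset_union_right hsupp hsys hgS
  have hpos : 0 < phat ⬝ᵥ B *ᵥ phat := hB.dotProduct_mulVec_pos hp
  refine ⟨key, by linarith, ?_⟩
  rintro ⟨hC, hneg⟩
  have : 0 < ∑ i ∈ C, g i * phat i :=
    sum_pos (fun i hi => mul_pos_of_neg_of_neg (hneg i hi).1 (hneg i hi).2) hC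
  linarith

/-- the key contradiction argument of Lemma 2. -/
theorem stmt_6 (n : ℕ) (B : Matrix (Fin n) (Fin n) ℝ) (hB : B.PosDef)
    (g phat : Fin n → ℝ) (F Abar C : Finset (Fin n))
    (hFAbar : Disjoint F Abar) (hFC : Disjoint F C) (hAbarC : Disjoint Abar C)
    (hsupp : ∀ i ∉ F ∪ Abar ∪ C, phat i = 0)
    (hsys : ∀ i ∈ F ∪ Abar ∪ C, B.mulVec phat i = -g i)
    (hgF : ∀ i ∈ F, g i = 0) (hgAbar : ∀ i ∈ Abar, g i = 0)
    (hp : phat ≠ 0) :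
    (∑ i ∈ C, g i * phat i = -(phat ⬝ᵥ B.mulVec phat)) ∧
    (∑ i ∈ C, g i * phat i < 0) ∧
    ((C.Nonempty ∧ ∀ i ∈ C, g i < 0 ∧ phat i < 0) → False) :=
  stmt_6_general n B hB g phat F Abar C hsupp hsys hgF hgAbar hp
end
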